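/- Fix n ≥ 1 and let ρ = ρ₁ ⊗ ⋯ ⊗ ρₙ and σ = σ₁ ⊗ ⋯ ⊗ σₙ be arbitrary product density operators on (ℂ²)^{⊗n} (each ρ_ℓ, σ_ℓ a single-qubit density operator). Then A_n(ρ,σ) · B_{n,H}(ρ,σ) ≤ (18/5)^n, with equality attained when ρ = σ is an identical pure product state. -/

import Mathlib

open Matrix BigOperators
open scoped ComplexOrder

noncomputable section

abbrev QIdx (n : ℕ) := Fin n → Fin 2

def IsDensity {ι : Type*} [Fintype ι] [DecidableEq ι] (ρ : Matrix ι ι ℂ) : Prop :=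
  ρ.PosSemidef ∧ ρ.trace = 1

/-- The operator on `(ℂ²)^{⊗k}` permuting the `k` tensor factors according to `π`. -/
def permOp {k : ℕ} (π : Equiv.Perm (Fin k)) : Matrix (Fin k → Fin 2) (Fin k → Fin 2) ℂ :=
  fun a b => if ∀ i, b i = a (π i) then 1 else 0

def pauliX : Matrix (Fin 2) (Fin 2) ℂ := !![0, 1; 1, 0]
def pauliY : Matrix (Fin 2) (Fin 2) ℂ := !![0, -Complex.I; Complex.I, 0]
def pauliZ : Matrix (Fin 2) (Fin 2) ℂ := !![1, 0; 0, -1]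

/-- `P^{⊗k}` on `(ℂ²)^{⊗k}`. -/
def pauliPow (k : ℕ) (P : Matrix (Fin 2) (Fin 2) ℂ) :
    Matrix (Fin k → Fin 2) (Fin k → Fin 2) ℂ :=
  fun a b => ∏ i, P (a i) (b i)

/-- The single-qubit Clifford fourth-moment operator `R_{4,Cl}` on `(ℂ²)^{⊗4}`. -/
def R4Cl : Matrix (Fin 4 → Fin 2) (Fin 4 → Fin 2) ℂ :=
  -1 + ((1 : ℂ)/2) • (permOp (Equiv.swap 0 1) + permOp (Equiv.swap 2 3))
    + ((3 : ℂ)/4) • (1 + pauliPow 4 pauliX + pauliPow 4 pauliY + pauliPow 4 pauliZ)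

/-- The single-qubit Haar fourth-moment operator `R_{4,H}` on `(ℂ²)^{⊗4}`. -/
def R4H : Matrix (Fin 4 → Fin 2) (Fin 4 → Fin 2) ℂ :=
  ((1 : ℂ)/5) • (1 + permOp (Equiv.swap 0 1) + permOp (Equiv.swap 2 3))
  + ((3 : ℂ)/5) • (permOp (Equiv.swap 0 1 * Equiv.swap 2 3)
      + permOp (Equiv.swap 0 2 * Equiv.swap 1 3)
      + permOp (Equiv.swap 0 3 * Equiv.swap 1 2))
  - ((3 : ℂ)/10) • (permOp (Equiv.swap 0 2) + permOp (Equiv.swap 1 3)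
      + permOp (Equiv.swap 0 3) + permOp (Equiv.swap 1 2))

/-- Per-qubit `n`-fold tensor power of an operator on `(ℂ²)^{⊗k}` (k replicas),
acting on `k` copies of `(ℂ²)^{⊗n}`. -/
def repPow (n : ℕ) {k : ℕ} (R : Matrix (Fin k → Fin 2) (Fin k → Fin 2) ℂ) :
    Matrix (Fin k → QIdx n) (Fin k → QIdx n) ℂ :=
  fun a b => ∏ ℓ : Fin n, R (fun r => a r ℓ) (fun r => b r ℓ)

/-- The four-replica state `ρ ⊗ σ ⊗ ρ ⊗ σ`. -/
def rep4 {n : ℕ} (ρ σ : Matrix (QIdx n) (QIdx n) ℂ) :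
    Matrix (Fin 4 → QIdx n) (Fin 4 → QIdx n) ℂ :=
  fun a b => ρ (a 0) (b 0) * σ (a 1) (b 1) * ρ (a 2) (b 2) * σ (a 3) (b 3)

/-- The pure state `|ψ⟩⟨ψ|`. -/
def pureState {ι : Type*} (ψ : ι → ℂ) : Matrix ι ι ℂ :=
  fun a b => ψ a * star (ψ b)


/-- `ρ ⊗ σ` on `(ℂ²)^{⊗n} ⊗ (ℂ²)^{⊗n}`. -/
def kron2 {n : ℕ} (ρ σ : Matrix (QIdx n) (QIdx n) ℂ) :
    Matrix (QIdx n × QIdx n) (QIdx n × QIdx n) ℂ :=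
  fun p q => ρ p.1 q.1 * σ p.2 q.2

/-- The partial swap `F_S` on `(ℂ²)^{⊗n} ⊗ (ℂ²)^{⊗n}`. -/
def partialSwap {n : ℕ} (S : Finset (Fin n)) :
    Matrix (QIdx n × QIdx n) (QIdx n × QIdx n) ℂ :=
  fun p q => if (∀ ℓ, if ℓ ∈ S then q.1 ℓ = p.2 ℓ ∧ q.2 ℓ = p.1 ℓ
      else q.1 ℓ = p.1 ℓ ∧ q.2 ℓ = p.2 ℓ) then 1 else 0

/-- The second-moment coefficient `A_n(ρ,σ) = Σ_{S ⊆ [n]} 2^{n−|S|} tr[F_S(ρ⊗σ)]`. -/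
def An {n : ℕ} (ρ σ : Matrix (QIdx n) (QIdx n) ℂ) : ℂ :=
  ∑ S : Finset (Fin n), (2 : ℂ)^(n - S.card) * Matrix.trace (partialSwap S * kron2 ρ σ)

/-- The Haar fourth-moment coefficient `B_{n,H}(ρ,σ) = tr[R_{4,H}^{⊗n}(ρ⊗σ⊗ρ⊗σ)]`. -/
def BnH {n : ℕ} (ρ σ : Matrix (QIdx n) (QIdx n) ℂ) : ℂ :=
  Matrix.trace (repPow n R4H * rep4 ρ σ)

/-- The product state `ρ₁ ⊗ ⋯ ⊗ ρₙ` built from single-qubit operators. -/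
def prodState {n : ℕ} (ρ : Fin n → Matrix (Fin 2) (Fin 2) ℂ) :
    Matrix (QIdx n) (QIdx n) ℂ :=
  fun a b => ∏ ℓ, ρ ℓ (a ℓ) (b ℓ)

/-!
Both coefficients are traces of operators that act qubit by qubit against product states, so
they factor over the qubits: with `t = tr ρσ`, `p = tr ρ²`, `q = tr σ²` on each qubit,
`A_n = ∏ (2 + t)` (expand the product over the subsets `S`) and `B_{n,H} = ∏ b(t, p, q)`, where
`b` is obtained by evaluating each of the nine permutations in `R_{4,H}` by its cycle type.
In Bloch coordinates `t = (1 + ⟪r, s⟫)/2` and `p = (1 + ‖r‖²)/2`, so `t ∈ [0, 1]` and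
`p, q ∈ [1/2, 1]`. On that box `b` is nonnegative and increasing in `p` and `q`, and
`(2 + t) b(t, 1, 1) = 18/5 - (1 - t)(6t² + 17t + 16)/5`, so each qubit contributes a factor in
`[0, 18/5]`; a pure state has `t = p = q = 1` and contributes exactly `3 · 6/5 = 18/5`.
-/

open Matrix

def piKron {ι κ : Type*} [Fintype ι] (m : ι → Matrix κ κ ℂ) : Matrix (ι → κ) (ι → κ) ℂ :=
  fun a b => ∏ i, m i (a i) (b i)

lemma trace_submatrix_equiv {α β : Type*} [Fintype α] [Fintype β] (A : Matrix β β ℂ)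
    (e : α ≃ β) : (A.submatrix e e).trace = A.trace :=
  e.sum_comp A.diag

section PiKron

variable {ι κ : Type*} [Fintype ι] [DecidableEq ι] [Fintype κ]

lemma trace_piKron (m : ι → Matrix κ κ ℂ) : (piKron m).trace = ∏ i, (m i).trace := by
  simp only [trace, diag, piKron, Fintype.prod_sum]

lemma trace_piKron_mul_piKron (m m' : ι → Matrix κ κ ℂ) :
    (piKron m * piKron m').trace = ∏ i, (m i * m' i).trace := by
  simp only [trace, diag, mul_apply, piKron, ← Finset.prod_mul_distrib, Fintype.prod_sum]

end PiKron

lemma Fintype.sum_fun_fin_succ {α M : Type*} [Fintype α] [AddCommMonoid M] {k : ℕ}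
    (g : (Fin (k + 1) → α) → M) :
    ∑ f, g f = ∑ x, ∑ f : Fin k → α, g (vecCons x f) := by
  rw [← (Fin.consEquiv fun _ => α).sum_comp, Fintype.sum_prod_type]
  rfl

lemma permOp_one {k : ℕ} : permOp (1 : Equiv.Perm (Fin k)) = 1 := by
  ext a b
  simp only [permOp, Equiv.Perm.coe_one, id_eq, ← funext_iff, one_apply, eq_comm]

lemma trace_permOp_mul_piKron {k : ℕ} (π : Equiv.Perm (Fin k))
    (ρ : Fin k → Matrix (Fin 2) (Fin 2) ℂ) :
    (permOp π * piKron ρ).trace = ∑ a : Fin k → Fin 2, ∏ r, ρ r (a (π r)) (a r) := by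
  simp only [trace, diag, mul_apply, permOp, piKron, ite_mul, one_mul, zero_mul]
  refine Finset.sum_congr rfl fun a _ => ?_
  simp only [← funext_iff, Finset.sum_ite_eq', Finset.mem_univ, if_true]

lemma trace_permOp_swap_mul_piKron (ρ σ : Matrix (Fin 2) (Fin 2) ℂ) :
    (permOp (Equiv.swap 0 1) * piKron ![ρ, σ]).trace = (ρ * σ).trace := by
  simp only [trace_permOp_mul_piKron, Fintype.sum_fun_fin_succ, Fintype.sum_unique,
    Fin.prod_univ_two, Equiv.swap_apply_left, Equiv.swap_apply_right, cons_val_zero, cons_val_one,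
    cons_val_fin_one, Fin.sum_univ_two, trace_fin_two, mul_apply]
  ring

lemma trace_permOp_one_mul_piKron (ρ σ : Matrix (Fin 2) (Fin 2) ℂ) :
    (permOp 1 * piKron ![ρ, σ]).trace = ρ.trace * σ.trace := by
  rw [permOp_one, one_mul, trace_piKron, Fin.prod_univ_two]
  rfl

def twoReplicaEquiv (n : ℕ) : QIdx n × QIdx n ≃ (Fin n → Fin 2 → Fin 2) :=
  (piFinTwoEquiv fun _ => QIdx n).symm.trans (Equiv.piComm _)

lemma partialSwap_eq_submatrix {n : ℕ} (S : Finset (Fin n)) :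
    partialSwap S = (piKron fun ℓ => permOp (if ℓ ∈ S then Equiv.swap 0 1 else 1)).submatrix
      (twoReplicaEquiv n) (twoReplicaEquiv n) := by
  ext a b
  simp only [partialSwap, piKron, permOp, submatrix_apply]
  rw [Fintype.prod_boole]
  congr 1
  refine propext (forall_congr' fun ℓ => ?_)
  split_ifs <;> simp [twoReplicaEquiv, Fin.forall_fin_two]

lemma kron2_prodState {n : ℕ} (ρ σ : Fin n → Matrix (Fin 2) (Fin 2) ℂ) :
    kron2 (prodState ρ) (prodState σ)
      = (piKron fun ℓ => piKron ![ρ ℓ, σ ℓ]).submatrix (twoReplicaEquiv n) (twoReplicaEquiv n) := by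
  ext a b
  simp only [kron2, prodState, piKron, submatrix_apply, Fin.prod_univ_two,
    ← Finset.prod_mul_distrib]
  rfl

lemma repPow_eq_submatrix (n : ℕ) {k : ℕ} (R : Matrix (Fin k → Fin 2) (Fin k → Fin 2) ℂ) :
    repPow n R = (piKron fun _ : Fin n => R).submatrix (Equiv.piComm _) (Equiv.piComm _) :=
  rfl

lemma rep4_prodState {n : ℕ} (ρ σ : Fin n → Matrix (Fin 2) (Fin 2) ℂ) :
    rep4 (prodState ρ) (prodState σ) = (piKron fun ℓ => piKron ![ρ ℓ, σ ℓ, ρ ℓ, σ ℓ]).submatrix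
      (Equiv.piComm _) (Equiv.piComm _) := by
  ext a b
  simp only [rep4, prodState, piKron, submatrix_apply, Fin.prod_univ_four,
    ← Finset.prod_mul_distrib]
  rfl

lemma trace_partialSwap_mul_kron2 {n : ℕ} (S : Finset (Fin n))
    (ρ σ : Fin n → Matrix (Fin 2) (Fin 2) ℂ) :
    (partialSwap S * kron2 (prodState ρ) (prodState σ)).trace
      = ∏ ℓ, if ℓ ∈ S then (ρ ℓ * σ ℓ).trace else (ρ ℓ).trace * (σ ℓ).trace := by
  rw [partialSwap_eq_submatrix, kron2_prodState, submatrix_mul_equiv, trace_submatrix_equiv,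
    trace_piKron_mul_piKron]
  refine Finset.prod_congr rfl fun ℓ _ => ?_
  split_ifs
  · exact trace_permOp_swap_mul_piKron _ _
  · exact trace_permOp_one_mul_piKron _ _

def haarQubitFactor {K : Type*} [Field K] (t p q : K) : K :=
  1 / 5 * (1 + 2 * t) + 3 / 5 * (2 * t ^ 2 + p * q) - 3 / 10 * (p + q + 2 * t)

@[simp, norm_cast]
lemma Complex.ofReal_haarQubitFactor (t p q : ℝ) :
    ((haarQubitFactor t p q : ℝ) : ℂ) = haarQubitFactor (t : ℂ) p q := by
  simp [haarQubitFactor]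

lemma trace_R4H_mul_piKron {ρ σ : Matrix (Fin 2) (Fin 2) ℂ} (hρ : ρ.trace = 1)
    (hσ : σ.trace = 1) :
    (R4H * piKron ![ρ, σ, ρ, σ]).trace
      = haarQubitFactor (ρ * σ).trace (ρ * ρ).trace (σ * σ).trace := by
  -- Expanded entrywise, the identity holds only modulo `tr ρ = tr σ = 1`; eliminating `ρ 1 1` and
  -- `σ 1 1` turns it into a polynomial identity.
  have hρ11 : ρ 1 1 = 1 - ρ 0 0 := eq_sub_of_add_eq' (by rwa [trace_fin_two] at hρ)
  have hσ11 : σ 1 1 = 1 - σ 0 0 := eq_sub_of_add_eq' (by rwa [trace_fin_two] at hσ)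
  rw [R4H, ← permOp_one]
  simp only [add_mul, sub_mul, Matrix.smul_mul, trace_add, trace_sub, trace_smul, smul_eq_mul,
    trace_permOp_mul_piKron, Fintype.sum_fun_fin_succ, Fintype.sum_unique, Fin.prod_univ_four,
    Equiv.Perm.mul_apply, Equiv.Perm.coe_one, id_eq, Equiv.swap_apply_left, Equiv.swap_apply_right,
    Equiv.swap_apply_of_ne_of_ne, ne_eq, Fin.reduceEq, not_false_eq_true, cons_val_zero,
    cons_val_one, cons_val_two, cons_val_three, head_cons, tail_cons, Fin.sum_univ_two,
    haarQubitFactor, trace_fin_two, mul_apply, hρ11, hσ11]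
  ring

section ProductStates

variable {n : ℕ} {ρ σ : Fin n → Matrix (Fin 2) (Fin 2) ℂ}

lemma An_prodState (hρ : ∀ ℓ, (ρ ℓ).trace = 1) (hσ : ∀ ℓ, (σ ℓ).trace = 1) :
    An (prodState ρ) (prodState σ) = ∏ ℓ, (2 + (ρ ℓ * σ ℓ).trace) :=
  calc An (prodState ρ) (prodState σ)
      = ∑ S : Finset (Fin n), 2 ^ (n - S.card) * ∏ ℓ ∈ S, (ρ ℓ * σ ℓ).trace := by
        simp only [An, trace_partialSwap_mul_kron2, hρ, hσ, mul_one, Finset.prod_ite_mem,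
          Finset.univ_inter]
    _ = ∏ ℓ, ((ρ ℓ * σ ℓ).trace + 2) := by
        simp only [Fintype.prod_add, Finset.prod_const, Finset.card_compl, Fintype.card_fin,
          mul_comm]
    _ = ∏ ℓ, (2 + (ρ ℓ * σ ℓ).trace) := by simp only [add_comm]

lemma BnH_prodState (hρ : ∀ ℓ, (ρ ℓ).trace = 1) (hσ : ∀ ℓ, (σ ℓ).trace = 1) :
    BnH (prodState ρ) (prodState σ)
      = ∏ ℓ, haarQubitFactor (ρ ℓ * σ ℓ).trace (ρ ℓ * ρ ℓ).trace (σ ℓ * σ ℓ).trace := by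
  rw [BnH, repPow_eq_submatrix, rep4_prodState, submatrix_mul_equiv, trace_submatrix_equiv,
    trace_piKron_mul_piKron]
  exact Finset.prod_congr rfl fun ℓ _ => trace_R4H_mul_piKron (hρ ℓ) (hσ ℓ)

end ProductStates

def blochState (r : EuclideanSpace ℝ (Fin 3)) : Matrix (Fin 2) (Fin 2) ℂ :=
  (1 / 2 : ℂ) • (1 + (r 0 : ℂ) • pauliX + (r 1 : ℂ) • pauliY + (r 2 : ℂ) • pauliZ)

lemma blochState_eq (r : EuclideanSpace ℝ (Fin 3)) :
    blochState r = !![(1 + (r 2 : ℂ)) / 2, (r 0 - r 1 * Complex.I) / 2;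
      (r 0 + r 1 * Complex.I) / 2, (1 - r 2) / 2] := by
  ext i j
  fin_cases i <;> fin_cases j <;> simp [blochState, pauliX, pauliY, pauliZ] <;> ring

lemma trace_blochState_mul_blochState (r s : EuclideanSpace ℝ (Fin 3)) :
    (blochState r * blochState s).trace = ((1 + inner ℝ r s) / 2 : ℝ) := by
  rw [blochState_eq, blochState_eq, mul_fin_two, trace_fin_two]
  simp only [of_apply, cons_val', cons_val_zero, cons_val_fin_one, cons_val_one, PiLp.inner_apply,
    RCLike.inner_apply, Real.ringHom_apply, Fin.sum_univ_three, Complex.ofReal_div,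
    Complex.ofReal_add, Complex.ofReal_one, Complex.ofReal_mul, Complex.ofReal_ofNat]
  ring_nf
  simp only [Complex.I_sq]
  ring

lemma IsDensity.exists_eq_blochState {ρ : Matrix (Fin 2) (Fin 2) ℂ} (h : IsDensity ρ) :
    ∃ r : EuclideanSpace ℝ (Fin 3), ‖r‖ ≤ 1 ∧ ρ = blochState r := by
  obtain ⟨hpsd, htr⟩ := h
  have h00 := hpsd.isHermitian.apply 0 0
  have h11 := hpsd.isHermitian.apply 1 1
  have h10 := hpsd.isHermitian.apply 1 0
  have hdet := hpsd.det_nonneg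
  rw [det_fin_two, ← h10] at hdet
  rw [trace_fin_two] at htr
  have him00 : (ρ 0 0).im = 0 := Complex.conj_eq_iff_im.mp h00
  have him11 : (ρ 1 1).im = 0 := Complex.conj_eq_iff_im.mp h11
  have hre : (ρ 0 0).re + (ρ 1 1).re = 1 := by simpa using congrArg Complex.re htr
  have hdet' : (ρ 0 1).re ^ 2 + (ρ 0 1).im ^ 2 ≤ (ρ 0 0).re * (ρ 1 1).re := by
    have := (Complex.le_def.mp hdet).1
    simp only [Complex.zero_re, RCLike.star_def, Complex.sub_re, Complex.mul_re, him00, him11,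
      mul_zero, sub_zero, Complex.conj_re, Complex.conj_im, mul_neg, sub_neg_eq_add, sub_nonneg]
      at this
    nlinarith
  -- `‖r‖² = (tr ρ)² - 4 det ρ`
  refine ⟨!₂[2 * (ρ 0 1).re, -2 * (ρ 0 1).im, (ρ 0 0).re - (ρ 1 1).re], ?_, ?_⟩
  · rw [← sq_le_one_iff₀ (norm_nonneg _), EuclideanSpace.real_norm_sq_eq, Fin.sum_univ_three]
    simp only [cons_val_zero, cons_val_one, cons_val_two, head_cons, tail_cons]
    nlinarith
  · ext i j
    fin_cases i <;> fin_cases j <;> apply Complex.ext <;>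
      simp [blochState_eq, ← h10, him00, him11] <;> linarith

section HaarQubitFactor

variable {t p q : ℝ}

lemma haarQubitFactor_nonneg (hp : 1 / 2 ≤ p) (hq : 1 / 2 ≤ q) : 0 ≤ haarQubitFactor t p q := by
  have hpq : 0 ≤ (2 * p - 1) * (2 * q - 1) := mul_nonneg (by linarith) (by linarith)
  unfold haarQubitFactor
  nlinarith [sq_nonneg (12 * t - 1)]

lemma haarQubitFactor_le_of_le_one (hp : 0 ≤ p) (hp1 : p ≤ 1) (hq : 0 ≤ q) (hq1 : q ≤ 1) :
    haarQubitFactor t p q ≤ haarQubitFactor t 1 1 := by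
  have h₁ : 0 ≤ p * (1 - q) := mul_nonneg hp (by linarith)
  have h₂ : 0 ≤ q * (1 - p) := mul_nonneg hq (by linarith)
  unfold haarQubitFactor
  nlinarith

lemma two_add_mul_haarQubitFactor_le (ht : 0 ≤ t) (ht1 : t ≤ 1) (hp : 0 ≤ p) (hp1 : p ≤ 1)
    (hq : 0 ≤ q) (hq1 : q ≤ 1) : (2 + t) * haarQubitFactor t p q ≤ 18 / 5 :=
  calc (2 + t) * haarQubitFactor t p q ≤ (2 + t) * haarQubitFactor t 1 1 :=
        mul_le_mul_of_nonneg_left (haarQubitFactor_le_of_le_one hp hp1 hq hq1) (by linarith)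
    _ = 18 / 5 - (1 - t) * (6 * t ^ 2 + 17 * t + 16) / 5 := by unfold haarQubitFactor; ring
    _ ≤ 18 / 5 := by
        have : 0 ≤ (1 - t) * (6 * t ^ 2 + 17 * t + 16) := mul_nonneg (by linarith) (by positivity)
        linarith

end HaarQubitFactor

lemma IsDensity.two_add_trace_mul_haarQubitFactor_mem_Icc {ρ σ : Matrix (Fin 2) (Fin 2) ℂ}
    (hρ : IsDensity ρ) (hσ : IsDensity σ) :
    (2 + (ρ * σ).trace) * haarQubitFactor (ρ * σ).trace (ρ * ρ).trace (σ * σ).trace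
      ∈ Set.Icc 0 (18 / 5) := by
  obtain ⟨r, hr, rfl⟩ := hρ.exists_eq_blochState
  obtain ⟨s, hs, rfl⟩ := hσ.exists_eq_blochState
  obtain ⟨hrs, hrs1⟩ := abs_le.mp <|
    (abs_real_inner_le_norm r s).trans (mul_le_one₀ hr (norm_nonneg s) hs)
  have hr2 : ‖r‖ ^ 2 ≤ 1 := pow_le_one₀ (norm_nonneg r) hr
  have hs2 : ‖s‖ ^ 2 ≤ 1 := pow_le_one₀ (norm_nonneg s) hs
  have hp : 1 / 2 ≤ (1 + ‖r‖ ^ 2) / 2 := by linarith [sq_nonneg ‖r‖]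
  have hq : 1 / 2 ≤ (1 + ‖s‖ ^ 2) / 2 := by linarith [sq_nonneg ‖s‖]
  simp only [trace_blochState_mul_blochState, real_inner_self_eq_norm_sq]
  rw [show (18 / 5 : ℂ) = ((18 / 5 : ℝ) : ℂ) by norm_num]
  constructor
  · exact_mod_cast mul_nonneg (by linarith) (haarQubitFactor_nonneg hp hq)
  · exact_mod_cast two_add_mul_haarQubitFactor_le (by linarith) (by linarith) (by linarith)
      (by linarith) (by linarith) (by linarith)

section PureState

variable {ι : Type*} [Fintype ι]

lemma trace_pureState (φ : ι → ℂ) : (pureState φ).trace = ∑ i, φ i * star (φ i) := rfl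

lemma pureState_mul_self {φ : ι → ℂ} (h : ∑ i, φ i * star (φ i) = 1) :
    pureState φ * pureState φ = pureState φ := by
  ext a b
  calc (pureState φ * pureState φ) a b = φ a * (∑ i, φ i * star (φ i)) * star (φ b) := by
        simp only [pureState, mul_apply, Finset.mul_sum, Finset.sum_mul]
        exact Finset.sum_congr rfl fun i _ => by ring
    _ = pureState φ a b := by rw [h, mul_one]; rfl

end PureState

lemma pureState_prod {n : ℕ} (ψ : Fin n → Fin 2 → ℂ) :
    pureState (fun s : QIdx n => ∏ ℓ, ψ ℓ (s ℓ)) = prodState fun ℓ => pureState (ψ ℓ) := by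
  ext a b
  simp only [pureState, prodState, star_prod, Finset.prod_mul_distrib]

theorem haar_certificate_product_pairs_general (n : ℕ) :
    (∀ ρ σ : Fin n → Matrix (Fin 2) (Fin 2) ℂ,
      (∀ ℓ, IsDensity (ρ ℓ)) → (∀ ℓ, IsDensity (σ ℓ)) →
      An (prodState ρ) (prodState σ) * BnH (prodState ρ) (prodState σ)
        ≤ ((18 : ℂ)/5)^n) ∧
    (∀ ψ : Fin n → (Fin 2 → ℂ), (∀ ℓ, (∑ i, ψ ℓ i * star (ψ ℓ i)) = 1) →
      An (pureState (fun s : QIdx n => ∏ ℓ, ψ ℓ (s ℓ)))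
         (pureState (fun s : QIdx n => ∏ ℓ, ψ ℓ (s ℓ)))
        * BnH (pureState (fun s : QIdx n => ∏ ℓ, ψ ℓ (s ℓ)))
              (pureState (fun s : QIdx n => ∏ ℓ, ψ ℓ (s ℓ)))
        = ((18 : ℂ)/5)^n) := by
  constructor
  · intro ρ σ hρ hσ
    have hbound := fun ℓ => (hρ ℓ).two_add_trace_mul_haarQubitFactor_mem_Icc (hσ ℓ)
    rw [An_prodState (fun ℓ => (hρ ℓ).2) (fun ℓ => (hσ ℓ).2),
      BnH_prodState (fun ℓ => (hρ ℓ).2) (fun ℓ => (hσ ℓ).2), ← Finset.prod_mul_distrib,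
      ← Fin.prod_const]
    exact Finset.prod_le_prod (fun ℓ _ => (hbound ℓ).1) fun ℓ _ => (hbound ℓ).2
  · intro ψ hψ
    have htr : ∀ ℓ, (pureState (ψ ℓ)).trace = 1 := fun ℓ => (trace_pureState _).trans (hψ ℓ)
    have hpure : ∀ ℓ, (pureState (ψ ℓ) * pureState (ψ ℓ)).trace = 1 := fun ℓ => by
      rw [pureState_mul_self (hψ ℓ), htr ℓ]
    rw [pureState_prod, An_prodState htr htr, BnH_prodState htr htr, ← Finset.prod_mul_distrib,
      ← Fin.prod_const]
    refine Finset.prod_congr rfl fun ℓ _ => ?_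
    rw [hpure]
    norm_num [haarQubitFactor]

/-- For arbitrary product density operators
`ρ = ρ₁ ⊗ ⋯ ⊗ ρₙ`, `σ = σ₁ ⊗ ⋯ ⊗ σₙ`, one has `A_n(ρ,σ) · B_{n,H}(ρ,σ) ≤ (18/5)^n`,
with equality attained when `ρ = σ` is an identical pure product state. -/
theorem haar_certificate_product_pairs (n : ℕ) (hn : 1 ≤ n) :
    (∀ ρ σ : Fin n → Matrix (Fin 2) (Fin 2) ℂ,
      (∀ ℓ, IsDensity (ρ ℓ)) → (∀ ℓ, IsDensity (σ ℓ)) →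
      An (prodState ρ) (prodState σ) * BnH (prodState ρ) (prodState σ)
        ≤ ((18 : ℂ)/5)^n) ∧
    (∀ ψ : Fin n → (Fin 2 → ℂ), (∀ ℓ, (∑ i, ψ ℓ i * star (ψ ℓ i)) = 1) →
      An (pureState (fun s : QIdx n => ∏ ℓ, ψ ℓ (s ℓ)))
         (pureState (fun s : QIdx n => ∏ ℓ, ψ ℓ (s ℓ)))
        * BnH (pureState (fun s : QIdx n => ∏ ℓ, ψ ℓ (s ℓ)))
              (pureState (fun s : QIdx n => ∏ ℓ, ψ ℓ (s ℓ)))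
        = ((18 : ℂ)/5)^n) :=
  haar_certificate_product_pairs_general n
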